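/- (Privacy lower bound with passports) Let W = D_γ·w, W̃ = D̃_γ·w̃ ∈ C^{m×n} (m ≥ n) with rank(W) > rank(W̃), where D_γ, D̃_γ are diagonal matrices of scaling weights and w, w̃ have spectral norm at most 1/C₂. Suppose O is a unit vector in R(W) orthogonal to R(W̃) with W̃⁺O = 0 and OᵀWWᵀO = 1. Let x = W⁺O and x̃ = W̃⁺O. Then ‖x̃ - x‖₂ ≥ 1/‖W̃ - W‖₂ ≥ 1/(‖W̃‖₂ + ‖W‖₂) ≥ C₂/(‖D_γ‖₂ + ‖D̃_γ‖₂). -/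

import Mathlib

open scoped Matrix Matrix.Norms.L2Operator

/-- The four Penrose conditions characterizing the Moore–Penrose pseudoinverse. -/
def IsMoorePenroseInverse {m n : ℕ} (W : Matrix (Fin m) (Fin n) ℂ)
    (Wp : Matrix (Fin n) (Fin m) ℂ) : Prop :=
  W * Wp * W = W ∧ Wp * W * Wp = Wp ∧ (W * Wp)ᴴ = W * Wp ∧ (Wp * W)ᴴ = Wp * W

/-!
Since `O = W z` lies in the range of `W` and `W W⁺ W = W`, we have `W (W⁺ O) = O`, while
`O ⊥ R(W̃)` kills `Oᴴ W̃`. Hence `Oᴴ (W - W̃) (W⁺ O) = Oᴴ O`, and Cauchy–Schwarz turns this into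
`1 = ‖O‖ ≤ ‖W - W̃‖ ‖W⁺ O‖ = ‖W̃ - W‖ ‖x̃ - x‖` because `x̃ = W̃⁺ O = 0`. The other two
inequalities are the triangle inequality and `‖D w‖ ≤ ‖D‖ ‖w‖ ≤ ‖D‖ / C₂`.
-/

namespace Matrix

variable {R 𝕜 m n k : Type*} [Fintype m] [Fintype n]

theorem conjTranspose_mul_sub_mul_mul_eq [Ring R] [StarRing R] {W Wt : Matrix m n R}
    {Wp : Matrix n m R} {O : Matrix m k R} {z : Matrix n k R} (hWp : W * Wp * W = W)
    (hz : O = W * z) (horth : Wtᴴ * O = 0) :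
    Oᴴ * ((W - Wt) * (Wp * O)) = Oᴴ * O := by
  have hOWt : Oᴴ * Wt = 0 := by
    simpa only [conjTranspose_mul, conjTranspose_conjTranspose, conjTranspose_zero]
      using congrArg conjTranspose horth
  have hWWpO : W * (Wp * O) = O := by rw [← Matrix.mul_assoc, hz, ← Matrix.mul_assoc, hWp]
  rw [Matrix.sub_mul, Matrix.mul_sub, hWWpO, ← Matrix.mul_assoc Oᴴ Wt, hOWt,
    Matrix.zero_mul, sub_zero]

variable [RCLike 𝕜] [Fintype k] [DecidableEq m] [DecidableEq n] [DecidableEq k]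

theorem l2_opNorm_le_of_conjTranspose_mul_eq {O y : Matrix m k 𝕜} (hy : Oᴴ * y = Oᴴ * O) :
    ‖O‖ ≤ ‖y‖ := by
  rcases (norm_nonneg O).eq_or_lt with hO | hO
  · exact hO ▸ norm_nonneg y
  refine le_of_mul_le_mul_left ?_ hO
  calc ‖O‖ * ‖O‖ = ‖Oᴴ * y‖ := by rw [hy, l2_opNorm_conjTranspose_mul_self]
    _ ≤ ‖Oᴴ‖ * ‖y‖ := l2_opNorm_mul _ _
    _ = ‖O‖ * ‖y‖ := by rw [l2_opNorm_conjTranspose]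

theorem l2_opNorm_le_l2_opNorm_sub_mul_pinv_mul {W Wt : Matrix m n 𝕜} {Wp : Matrix n m 𝕜}
    {O : Matrix m k 𝕜} {z : Matrix n k 𝕜} (hWp : W * Wp * W = W) (hz : O = W * z)
    (horth : Wtᴴ * O = 0) :
    ‖O‖ ≤ ‖W - Wt‖ * ‖Wp * O‖ :=
  (l2_opNorm_le_of_conjTranspose_mul_eq (conjTranspose_mul_sub_mul_mul_eq hWp hz horth)).trans
    (l2_opNorm_mul _ _)

theorem l2_opNorm_mul_le_div {D : Matrix m m 𝕜} {w : Matrix m n 𝕜} {C : ℝ} (hw : ‖w‖ ≤ 1 / C) :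
    ‖D * w‖ ≤ ‖D‖ / C :=
  calc ‖D * w‖ ≤ ‖D‖ * ‖w‖ := l2_opNorm_mul _ _
    _ ≤ ‖D‖ * (1 / C) := by gcongr
    _ = ‖D‖ / C := mul_one_div _ _

end Matrix

theorem passport_privacy_lower_bound_general {m n : ℕ}
    (Dg Dgt : Matrix (Fin m) (Fin m) ℂ)
    (w wt : Matrix (Fin m) (Fin n) ℂ)
    (C₂ : ℝ) (hw : ‖w‖ ≤ 1 / C₂) (hwt : ‖wt‖ ≤ 1 / C₂)
    (W Wt : Matrix (Fin m) (Fin n) ℂ) (hW : W = Dg * w) (hWt : Wt = Dgt * wt)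
    (Wp Wtp : Matrix (Fin n) (Fin m) ℂ)
    (hMP : IsMoorePenroseInverse W Wp)
    (O : Matrix (Fin m) (Fin 1) ℂ) (hO : ‖O‖ = 1)
    (hcol : ∃ z : Matrix (Fin n) (Fin 1) ℂ, O = W * z)
    (horth : Wtᴴ * O = 0) (hker : Wtp * O = 0)
    (x xt : Matrix (Fin n) (Fin 1) ℂ) (hx : x = Wp * O) (hxt : xt = Wtp * O) :
    1 / ‖Wt - W‖ ≤ ‖xt - x‖ ∧
    1 / (‖Wt‖ + ‖W‖) ≤ 1 / ‖Wt - W‖ ∧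
    C₂ / (‖Dg‖ + ‖Dgt‖) ≤ 1 / (‖Wt‖ + ‖W‖) := by
  obtain ⟨z, hz⟩ := hcol
  have hprod : 1 ≤ ‖Wt - W‖ * ‖xt - x‖ := by
    simpa only [hO, hx, hxt, hker, zero_sub, norm_neg, norm_sub_rev W Wt]
      using Matrix.l2_opNorm_le_l2_opNorm_sub_mul_pinv_mul hMP.1 hz horth
  have hpos : 0 < ‖Wt - W‖ :=
    (norm_nonneg _).lt_of_ne fun h ↦ by rw [← h, zero_mul] at hprod; linarith
  have hsum : ‖Wt‖ + ‖W‖ ≤ (‖Dg‖ + ‖Dgt‖) / C₂ := by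
    rw [hW, hWt, add_div, add_comm (‖Dg‖ / C₂)]
    exact add_le_add (Matrix.l2_opNorm_mul_le_div hwt) (Matrix.l2_opNorm_mul_le_div hw)
  refine ⟨(div_le_iff₀ hpos).2 (by linarith), one_div_le_one_div_of_le hpos (norm_sub_le _ _), ?_⟩
  rw [← one_div_div]
  exact one_div_le_one_div_of_le (hpos.trans_le (norm_sub_le _ _)) hsum

/-- Theorem 1, Case 2 of the paper (privacy lower bound with passports):
with a rank-deficient surrogate `W̃ = D̃_γ·w̃` of the passport-protected weight
`W = D_γ·w`, the restoration error of `x̃ = W̃⁺O` versus `x = W⁺O` is bounded below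
by `C₂/(‖D_γ‖₂ + ‖D̃_γ‖₂)` through the chain of inequalities
`‖x̃ - x‖₂ ≥ 1/‖W̃ - W‖₂ ≥ 1/(‖W̃‖₂ + ‖W‖₂) ≥ C₂/(‖D_γ‖₂ + ‖D̃_γ‖₂)`. -/
theorem passport_privacy_lower_bound {m n : ℕ} (hmn : n ≤ m)
    (γ γt : Fin m → ℂ) (Dg Dgt : Matrix (Fin m) (Fin m) ℂ)
    (hD : Dg = Matrix.diagonal γ) (hDt : Dgt = Matrix.diagonal γt)
    (w wt : Matrix (Fin m) (Fin n) ℂ)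
    (C₂ : ℝ) (hC : 0 < C₂) (hw : ‖w‖ ≤ 1 / C₂) (hwt : ‖wt‖ ≤ 1 / C₂)
    (W Wt : Matrix (Fin m) (Fin n) ℂ) (hW : W = Dg * w) (hWt : Wt = Dgt * wt)
    (hrank : Wt.rank < W.rank)
    (Wp Wtp : Matrix (Fin n) (Fin m) ℂ)
    (hMP : IsMoorePenroseInverse W Wp) (hMPt : IsMoorePenroseInverse Wt Wtp)
    (O : Matrix (Fin m) (Fin 1) ℂ) (hO : ‖O‖ = 1)
    (hcol : ∃ z : Matrix (Fin n) (Fin 1) ℂ, O = W * z)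
    (horth : Wtᴴ * O = 0) (hker : Wtp * O = 0)
    (hOW : Oᴴ * W * Wᴴ * O = 1)
    (x xt : Matrix (Fin n) (Fin 1) ℂ) (hx : x = Wp * O) (hxt : xt = Wtp * O) :
    1 / ‖Wt - W‖ ≤ ‖xt - x‖ ∧
    1 / (‖Wt‖ + ‖W‖) ≤ 1 / ‖Wt - W‖ ∧
    C₂ / (‖Dg‖ + ‖Dgt‖) ≤ 1 / (‖Wt‖ + ‖W‖) :=
  passport_privacy_lower_bound_general Dg Dgt w wt C₂ hw hwt W Wt hW hWt Wp Wtp hMP O hO hcol horth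
    hker x xt hx hxt
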